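/- Pulling back K₂ under R₂ : (x₂,y₂,z₂,w₂) = (q₁, p₁, 1/q₂, −(q₂p₂+α₃)q₂) (i.e. substituting q₂ = 1/z₂, p₂ = −z₂(z₂w₂ + α₃)) yields a polynomial in x₂, y₂, z₂, w₂: all negative powers of z₂ cancel in K₂(x₂, y₂, 1/z₂, −z₂(z₂w₂+α₃)). -/
import Mathlib

/-- K₂ as a function of (q₁,p₁,q₂,p₂) with parameters α₁, α₂, α₃. -/
noncomputable def K2f (α₁ α₂ α₃ q₁ p₁ q₂ p₂ : ℂ) : ℂ :=
  -α₃ ^ 2 * p₁ + q₂ ^ 4 * p₂ ^ 2 + 2 * q₂ ^ 2 * p₂ ^ 3 + p₂ ^ 4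
    + 2 * α₃ * q₂ ^ 3 * p₂ + 4 * (α₁ + α₃) * q₂ * p₂ ^ 2 + α₃ ^ 2 * q₂ ^ 2
    + α₃ * (2 * α₁ + α₃) * p₂
    - p₂ * (8 * q₁ * p₁ * q₂ * p₂ + 6 * p₁ * q₂ ^ 2 * p₂ + 4 * q₁ ^ 2 * p₁ * p₂
      + 2 * p₁ * p₂ ^ 2 - p₁ ^ 2 * p₂ + 4 * α₂ * q₁ * p₂ + 4 * α₃ * q₁ * p₁
      + 6 * α₃ * p₁ * q₂)

open MvPolynomial

set_option maxHeartbeats 2000000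
/-- pulling back K₂ under R₂, i.e. substituting q₁ = x₂, p₁ = y₂,
q₂ = 1/z₂, p₂ = −z₂(z₂w₂+α₃), yields a polynomial in x₂,y₂,z₂,w₂. -/
theorem K2_polynomial_in_R2 (α₁ α₂ α₃ : ℂ)
    (hrel : 2 * α₁ + 2 * α₂ + α₃ = 0) :
    ∃ P : MvPolynomial (Fin 4) ℂ, ∀ x₂ y₂ z₂ w₂ : ℂ, z₂ ≠ 0 →
      MvPolynomial.eval (![x₂, y₂, z₂, w₂]) P =
        K2f α₁ α₂ α₃ x₂ y₂ (1 / z₂) (-z₂ * (z₂ * w₂ + α₃)) := by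
  have hα₂ : α₂ = -α₁ - α₃ / 2 := by linear_combination hrel / 2
  subst hα₂
  refine ⟨
    C (1:ℂ) * X 3 ^ 2
    + C (-2:ℂ) * X 2 ^ 4 * X 3 ^ 3
    + C (1:ℂ) * X 2 ^ 8 * X 3 ^ 4
    + C (-6:ℂ) * X 1 * X 2 ^ 2 * X 3 ^ 2
    + C (2:ℂ) * X 1 * X 2 ^ 6 * X 3 ^ 3
    + C (1:ℂ) * X 1 ^ 2 * X 2 ^ 4 * X 3 ^ 2
    + C (-8:ℂ) * X 0 * X 1 * X 2 ^ 3 * X 3 ^ 2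
    + C (-4:ℂ) * X 0 ^ 2 * X 1 * X 2 ^ 4 * X 3 ^ 2
    + C (-2:ℂ) * C α₃ * X 2 ^ 3 * X 3 ^ 2
    + C (4:ℂ) * C α₃ * X 2 ^ 7 * X 3 ^ 3
    + C (-6:ℂ) * C α₃ * X 1 * X 2 * X 3
    + C (6:ℂ) * C α₃ * X 1 * X 2 ^ 5 * X 3 ^ 2
    + C (2:ℂ) * C α₃ * X 1 ^ 2 * X 2 ^ 3 * X 3
    + C (2:ℂ) * C α₃ * X 0 * X 2 ^ 4 * X 3 ^ 2
    + C (-12:ℂ) * C α₃ * X 0 * X 1 * X 2 ^ 2 * X 3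
    + C (-8:ℂ) * C α₃ * X 0 ^ 2 * X 1 * X 2 ^ 3 * X 3
    + C (1:ℂ) * C α₃ ^ 2 * X 2 ^ 2 * X 3
    + C (6:ℂ) * C α₃ ^ 2 * X 2 ^ 6 * X 3 ^ 2
    + C (-1:ℂ) * C α₃ ^ 2 * X 1
    + C (6:ℂ) * C α₃ ^ 2 * X 1 * X 2 ^ 4 * X 3
    + C (1:ℂ) * C α₃ ^ 2 * X 1 ^ 2 * X 2 ^ 2
    + C (4:ℂ) * C α₃ ^ 2 * X 0 * X 2 ^ 3 * X 3
    + C (-4:ℂ) * C α₃ ^ 2 * X 0 * X 1 * X 2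
    + C (-4:ℂ) * C α₃ ^ 2 * X 0 ^ 2 * X 1 * X 2 ^ 2
    + C (1:ℂ) * C α₃ ^ 3 * X 2
    + C (4:ℂ) * C α₃ ^ 3 * X 2 ^ 5 * X 3
    + C (2:ℂ) * C α₃ ^ 3 * X 1 * X 2 ^ 3
    + C (2:ℂ) * C α₃ ^ 3 * X 0 * X 2 ^ 2
    + C (1:ℂ) * C α₃ ^ 4 * X 2 ^ 4
    + C (4:ℂ) * C α₁ * X 2 ^ 3 * X 3 ^ 2
    + C (4:ℂ) * C α₁ * X 0 * X 2 ^ 4 * X 3 ^ 2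
    + C (6:ℂ) * C α₁ * C α₃ * X 2 ^ 2 * X 3
    + C (8:ℂ) * C α₁ * C α₃ * X 0 * X 2 ^ 3 * X 3
    + C (2:ℂ) * C α₁ * C α₃ ^ 2 * X 2
    + C (4:ℂ) * C α₁ * C α₃ ^ 2 * X 0 * X 2 ^ 2
    , ?_⟩
  intro x y z w hz
  simp only [map_add, map_mul, map_pow, eval_C, eval_X, K2f]
  simp only [Matrix.cons_val_zero, Matrix.cons_val_one, Matrix.head_cons,
    Matrix.cons_val_two, Matrix.tail_cons, Matrix.cons_val_three, Matrix.head_fin_const]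
  have hu : z * z⁻¹ = 1 := mul_inv_cancel₀ hz
  simp only [one_div]
  linear_combination ((-1:ℂ)*w^2 + (-1:ℂ)*z*w^2*z⁻¹ + (-1:ℂ)*z^2*w^2*z⁻¹^2 + (-1:ℂ)*z^3*w^2*z⁻¹^3 + (2:ℂ)*z^4*w^3 + (2:ℂ)*z^5*w^3*z⁻¹ + (6:ℂ)*y*z^2*w^2 + (6:ℂ)*y*z^3*w^2*z⁻¹ + (8:ℂ)*x*y*z^3*w^2 + (-2:ℂ)*α₃*z^2*w*z⁻¹^3 + (2:ℂ)*α₃*z^3*w^2 + (6:ℂ)*α₃*z^4*w^2*z⁻¹ + (6:ℂ)*α₃*y*z*w + (12:ℂ)*α₃*y*z^2*w*z⁻¹ + (16:ℂ)*α₃*x*y*z^2*w + (1:ℂ)*α₃^2*z⁻¹^2 + (-1:ℂ)*α₃^2*z*z⁻¹^3 + (-2:ℂ)*α₃^2*z^2*w + (6:ℂ)*α₃^2*z^3*w*z⁻¹ + (6:ℂ)*α₃^2*y*z*z⁻¹ + (8:ℂ)*α₃^2*x*y*z + (-2:ℂ)*α₃^3*z + (2:ℂ)*α₃^3*z^2*z⁻¹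 + (-4:ℂ)*α₁*z^3*w^2 + (-8:ℂ)*α₁*α₃*z^2*w + (-4:ℂ)*α₁*α₃^2*z) * hu
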